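/- For any integer n ≥ 2, the sum over k = 1 to n-1 of 1/(4 sin²(πk/(2n))) equals (n²−1)/6. -/

import Mathlib

/-!
Put `ζ = exp (2πi/m)` and `A x = ∑_{j<m} j xʲ`. At every `m`-th root of unity `ω ≠ 1` one has
`A ω = m / (ω - 1)`, so `1 / (4 sin² (πk/m)) = 1 / |1 - ζᵏ|² = |A ζᵏ|² / m²` for `0 < k < m`.
Parseval over the `m`-th roots of unity gives `∑_{k<m} |A ζᵏ|² = m ∑_{j<m} j²`; removing the term
`k = 0`, which is `(∑_{j<m} j)²`, leaves `∑_{k=1}^{m-1} 1 / (4 sin² (πk/m)) = (m² - 1) / 12`.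
The theorem is the case `m = 2n`, folded in half by the symmetry `k ↦ 2n - k`; the middle term
`k = n` is `1/4`.
-/

open Finset

section CommRing

variable {R : Type*} [CommRing R]

theorem sum_range_natCast_mul_two (m : ℕ) : (∑ j ∈ range m, (j : R)) * 2 = m * (m - 1) := by
  induction m with
  | zero => simp
  | succ m ih => rw [sum_range_succ, add_mul, ih]; push_cast; ring

theorem sum_range_natCast_sq_mul_six (m : ℕ) :
    (∑ j ∈ range m, (j : R) ^ 2) * 6 = m * (m - 1) * (2 * m - 1) := by
  induction m with
  | zero => simp
  | succ m ih => rw [sum_range_succ, add_mul, ih]; push_cast; ring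

theorem sub_one_sq_mul_sum_range_natCast_mul_pow (x : R) (m : ℕ) :
    (x - 1) ^ 2 * ∑ j ∈ range m, (j : R) * x ^ j = (m - 1) * x ^ (m + 1) - m * x ^ m + x := by
  induction m with
  | zero => simp
  | succ m ih => rw [sum_range_succ, mul_add, ih]; push_cast; ring

end CommRing

section Field

variable {K : Type*} [Field K]

theorem sum_range_natCast_mul_pow_of_pow_eq_one {x : K} {m : ℕ} (hxm : x ^ m = 1) (hx : x ≠ 1) :
    ∑ j ∈ range m, (j : K) * x ^ j = m / (x - 1) := by
  have hx' : x - 1 ≠ 0 := sub_ne_zero.mpr hx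
  have h := sub_one_sq_mul_sum_range_natCast_mul_pow x m
  rw [pow_succ x m, hxm] at h
  rw [eq_div_iff hx']
  apply mul_left_cancel₀ hx'
  linear_combination h

namespace IsPrimitiveRoot

variable {ζ : K} {m : ℕ}

theorem sum_range_pow_mul_inv_pow (hζ : IsPrimitiveRoot ζ m) {j l : ℕ} (hj : j < m) (hl : l < m) :
    ∑ k ∈ range m, (ζ ^ j * (ζ ^ l)⁻¹) ^ k = if j = l then (m : K) else 0 := by
  have hζ0 : ζ ≠ 0 := hζ.ne_zero (by omega)
  split_ifs with hjl
  · simp [hjl, hζ0]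
  · have hne : ζ ^ j * (ζ ^ l)⁻¹ ≠ 1 := by
      rw [ne_eq, mul_inv_eq_one₀ (pow_ne_zero _ hζ0)]
      exact fun h => hjl (hζ.pow_inj hj hl h)
    rw [geom_sum_eq hne, mul_pow, inv_pow, ← pow_mul, ← pow_mul, mul_comm j, mul_comm l, pow_mul,
      pow_mul, hζ.pow_eq_one]
    simp

theorem parseval (hζ : IsPrimitiveRoot ζ m) (f g : ℕ → K) :
    ∑ k ∈ range m, (∑ j ∈ range m, f j * (ζ ^ k) ^ j) * ∑ l ∈ range m, g l * ((ζ ^ k)⁻¹) ^ l =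
      m * ∑ j ∈ range m, f j * g j := by
  have hterm : ∀ k j l, f j * (ζ ^ k) ^ j * (g l * ((ζ ^ k)⁻¹) ^ l) =
      f j * g l * (ζ ^ j * (ζ ^ l)⁻¹) ^ k := by
    intro k j l
    rw [mul_pow, inv_pow, inv_pow, ← pow_mul, ← pow_mul, ← pow_mul, ← pow_mul,
      mul_comm k j, mul_comm k l]
    ring
  simp_rw [sum_mul_sum, hterm]
  calc ∑ k ∈ range m, ∑ j ∈ range m, ∑ l ∈ range m, f j * g l * (ζ ^ j * (ζ ^ l)⁻¹) ^ k
      = ∑ j ∈ range m, ∑ l ∈ range m, f j * g l * ∑ k ∈ range m, (ζ ^ j * (ζ ^ l)⁻¹) ^ k := by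
        rw [sum_comm]
        refine sum_congr rfl fun j _ => ?_
        rw [sum_comm]
        simp_rw [mul_sum]
    _ = ∑ j ∈ range m, ∑ l ∈ range m, f j * g l * if j = l then (m : K) else 0 :=
        sum_congr rfl fun j hj => sum_congr rfl fun l hl => by
          rw [hζ.sum_range_pow_mul_inv_pow (mem_range.mp hj) (mem_range.mp hl)]
    _ = m * ∑ j ∈ range m, f j * g j := by
        rw [mul_sum]
        refine sum_congr rfl fun j hj => ?_
        simp [mul_ite, mem_range.mp hj, mul_comm]

theorem sum_one_div_one_sub_pow_mul_one_sub_pow_inv [CharZero K] (hζ : IsPrimitiveRoot ζ m)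
    (hm : 0 < m) :
    ∑ k ∈ Icc 1 (m - 1), 1 / ((1 - ζ ^ k) * (1 - (ζ ^ k)⁻¹)) = ((m : K) ^ 2 - 1) / 12 := by
  set A : K → K := fun x => ∑ j ∈ range m, (j : K) * x ^ j with hA
  have hm0 : (m : K) ≠ 0 := by exact_mod_cast hm.ne'
  have hterm : ∀ k ∈ Icc 1 (m - 1),
      1 / ((1 - ζ ^ k) * (1 - (ζ ^ k)⁻¹)) = A (ζ ^ k) * A (ζ ^ k)⁻¹ / m ^ 2 := by
    intro k hk
    obtain ⟨hk1, hkm⟩ := mem_Icc.mp hk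
    have hne : ζ ^ k ≠ 1 := hζ.pow_ne_one_of_pos_of_lt (by omega) (by omega)
    have hne' : (ζ ^ k)⁻¹ ≠ 1 := inv_ne_one.mpr hne
    have hroot : (ζ ^ k) ^ m = 1 := by rw [← pow_mul, mul_comm, pow_mul, hζ.pow_eq_one, one_pow]
    simp only [hA]
    rw [sum_range_natCast_mul_pow_of_pow_eq_one hroot hne,
      sum_range_natCast_mul_pow_of_pow_eq_one (by rw [inv_pow, hroot, inv_one]) hne',
      div_mul_div_comm, ← sq, div_div_cancel_left' (pow_ne_zero 2 hm0), one_div]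
    congr 1
    ring
  have hparseval : ∑ k ∈ range m, A (ζ ^ k) * A (ζ ^ k)⁻¹ = m * ∑ j ∈ range m, (j : K) ^ 2 := by
    simp_rw [hA, sq]
    exact hζ.parseval _ _
  have hsplit (f : ℕ → K) : ∑ k ∈ range m, f k = f 0 + ∑ k ∈ Icc 1 (m - 1), f k := by
    rw [show range m = insert 0 (Icc 1 (m - 1)) by
        ext; simp only [mem_range, mem_insert, mem_Icc]; omega,
      sum_insert (by simp)]
  have hzero : A (ζ ^ 0) * A (ζ ^ 0)⁻¹ = (∑ j ∈ range m, (j : K)) ^ 2 := by simp [hA, sq]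
  rw [hsplit fun k => A (ζ ^ k) * A (ζ ^ k)⁻¹, hzero] at hparseval
  rw [sum_congr rfl hterm, ← sum_div]
  have h2 := sum_range_natCast_mul_two (R := K) m
  have h6 := sum_range_natCast_sq_mul_six (R := K) m
  rw [div_eq_div_iff (pow_ne_zero 2 hm0) (by norm_num)]
  linear_combination 12 * hparseval + (2 * m : K) * h6 -
    3 * ((∑ j ∈ range m, (j : K)) * 2 + m * (m - 1)) * h2

end IsPrimitiveRoot

end Field

open Complex in
theorem Complex.one_sub_exp_mul_one_sub_exp_inv (θ : ℝ) :
    (1 - exp (θ * I)) * (1 - (exp (θ * I))⁻¹) = ((4 * Real.sin (θ / 2) ^ 2 : ℝ) : ℂ) := by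
  set e := exp ((θ / 2 : ℝ) * I)
  have he0 : e ≠ 0 := exp_ne_zero _
  have hθ : exp (θ * I) = e ^ 2 := by rw [← exp_nat_mul]; push_cast; ring_nf
  have hsin : Complex.sin (θ / 2 : ℝ) = (e⁻¹ - e) * I / 2 := by
    rw [Complex.sin, ← exp_neg, neg_mul]
  rw [ofReal_mul, ofReal_pow, ofReal_sin, ofReal_ofNat, hsin, hθ]
  field_simp
  linear_combination -4 * (1 - e ^ 2) ^ 2 * I_sq

theorem sum_Icc_one_two_mul_sub_one_of_symm {M : Type*} [AddCommMonoid M] (f : ℕ → M) {n : ℕ}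
    (hn : 0 < n) (hf : ∀ k ≤ 2 * n, f (2 * n - k) = f k) :
    ∑ k ∈ Icc 1 (2 * n - 1), f k = 2 • ∑ k ∈ Icc 1 (n - 1), f k + f n := by
  have hreflect : ∑ k ∈ Ioc n (2 * n - 1), f k = ∑ k ∈ Icc 1 (n - 1), f k :=
    sum_nbij' (2 * n - ·) (2 * n - ·) (fun k hk => by simp only [mem_Ioc, mem_Icc] at hk ⊢; omega)
      (fun k hk => by simp only [mem_Ioc, mem_Icc] at hk ⊢; omega)
      (fun k hk => by simp only [mem_Ioc] at hk; omega)
      (fun k hk => by simp only [mem_Icc] at hk; omega)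
      (fun k hk => (hf k (by simp only [mem_Ioc] at hk; omega)).symm)
  rw [show Icc 1 (2 * n - 1) = insert n (Icc 1 (n - 1)) ∪ Ioc n (2 * n - 1) by
      ext; simp only [mem_union, mem_insert, mem_Icc, mem_Ioc]; omega,
    sum_union (disjoint_left.2 (by simp only [mem_insert, mem_Icc, mem_Ioc]; omega)),
    sum_insert (by simp only [mem_Icc]; omega), hreflect, two_nsmul]
  abel

open Real in
theorem sum_one_div_four_mul_sin_sq {m : ℕ} (hm : 0 < m) :
    ∑ k ∈ Icc 1 (m - 1), 1 / (4 * sin (π * k / m) ^ 2) = ((m : ℝ) ^ 2 - 1) / 12 := by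
  have hζ := Complex.isPrimitiveRoot_exp m hm.ne'
  have hterm (k : ℕ) : (1 - Complex.exp (2 * π * Complex.I / m) ^ k) *
      (1 - (Complex.exp (2 * π * Complex.I / m) ^ k)⁻¹) = ((4 * sin (π * k / m) ^ 2 : ℝ) : ℂ) := by
    rw [← Complex.exp_nat_mul,
      show (k : ℂ) * (2 * π * Complex.I / m) = ((2 * π * k / m : ℝ) : ℂ) * Complex.I by
        push_cast; ring,
      Complex.one_sub_exp_mul_one_sub_exp_inv]
    congr 4
    ring
  have h := hζ.sum_one_div_one_sub_pow_mul_one_sub_pow_inv hm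
  simp_rw [hterm] at h
  exact_mod_cast h

theorem stmt2 (n : ℕ) (hn : 2 ≤ n) :
    ∑ k ∈ Finset.Icc 1 (n - 1),
      1 / (4 * Real.sin (Real.pi * k / (2 * n)) ^ 2) =
      ((n : ℝ) ^ 2 - 1) / 6 := by
  set f : ℕ → ℝ := fun k => 1 / (4 * Real.sin (Real.pi * k / (2 * n)) ^ 2)
  have hreflect : ∀ k ≤ 2 * n, f (2 * n - k) = f k := by
    intro k hk
    simp only [f]
    rw [Nat.cast_sub hk, Nat.cast_mul, Nat.cast_ofNat, mul_sub, sub_div,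
      mul_div_cancel_right₀ _ (by positivity), Real.sin_pi_sub]
  have hmiddle : f n = 1 / 4 := by
    simp only [f]
    rw [show Real.pi * n / (2 * n) = Real.pi / 2 by field_simp, Real.sin_pi_div_two]
    norm_num
  have hfull := sum_one_div_four_mul_sin_sq (m := 2 * n) (by omega)
  push_cast at hfull
  change ∑ k ∈ Icc 1 (2 * n - 1), f k = _ at hfull
  rw [sum_Icc_one_two_mul_sub_one_of_symm f (by omega) hreflect, hmiddle, two_nsmul] at hfull
  linarith
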